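/- arXiv:1311.0185 — 2 statements merged into one kernel-verified Lean document; each statement's English description precedes it below -/
import Mathlib

section
/- Let x be the fixed point beginning in the letter a of the substitution f : a ↦ ac, b ↦ acab, c ↦ ab on {a, b, c}, and let z be the infinite word defined by z_n = x_{n+2} for all n (the second shift of x). Then z is a fixed point of the substitution g : a ↦ ab, b ↦ acac, c ↦ ac, and g is of class P. -/
open List

/-- The prefix of length `n` of an infinite word `x`. -/
def wordTake {A : Type*} (x : ℕ → A) (n : ℕ) : List A := (List.range n).map x

/-- The finite word `u` occurs in the infinite word `x` at position `i`. -/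
def OccursAt {A : Type*} (u : List A) (x : ℕ → A) (i : ℕ) : Prop :=
  (List.range u.length).map (fun k => x (i + k)) = u

/-- `u` is a factor of the infinite word `x`. -/
def IsFactor {A : Type*} (u : List A) (x : ℕ → A) : Prop := ∃ i, OccursAt u x i

/-- A palindrome is a finite word equal to its reversal. -/
def IsPalindrome {A : Type*} (u : List A) : Prop := u.reverse = u

/-- The number of distinct palindromic factors of a finite word `u`
(including the empty word). -/
noncomputable def palCount {A : Type*} (u : List A) : ℕ :=
  {v : List A | v <:+: u ∧ IsPalindrome v}.ncard

/-- A finite word `u` is rich if it has `|u| + 1` distinct palindromic factors. -/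
def RichList {A : Type*} (u : List A) : Prop := palCount u = u.length + 1

/-- An infinite word is rich if all of its factors are rich. -/
def RichWord {A : Type*} (x : ℕ → A) : Prop := ∀ u, IsFactor u x → RichList u

/-- The defect of a finite word. -/
noncomputable def defect {A : Type*} (u : List A) : ℕ := u.length + 1 - palCount u

/-- An infinite word has finite defect if the defects of its prefixes are bounded. -/
def FiniteDefect {A : Type*} (x : ℕ → A) : Prop :=
  ∃ C, ∀ n, defect (wordTake x n) ≤ C

/-- The extension of a morphism (given by its values on letters) to finite words. -/
def listApply {A B : Type*} (f : A → List B) (w : List A) : List B := w.flatMap f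

/-- A morphism is non-erasing if the image of every letter is non-empty. -/
def NonErasing {A B : Type*} (f : A → List B) : Prop := ∀ a, f a ≠ []

/-- `y` is the image of the infinite word `x` under the morphism `f`, i.e. `y = f(x)` :
the image of every prefix of `x` is a prefix of `y`. -/
def IsMorphicImage {A B : Type*} (f : A → List B) (x : ℕ → A) (y : ℕ → B) : Prop :=
  ∀ k, ∃ n, listApply f (wordTake x k) = wordTake y n

/-- A substitution is primitive if some power `τ^N` (`N ≥ 1`) maps every letter to a word
containing every letter. -/
def Primitive {A : Type*} (τ : A → List A) : Prop :=
  ∃ N : ℕ, 1 ≤ N ∧ ∀ a b : A, b ∈ (listApply τ)^[N] [a]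

/-- An infinite word is pure primitive morphic if it is a fixed point of a primitive
substitution. -/
def PurePrimitiveMorphic {A : Type*} (x : ℕ → A) : Prop :=
  ∃ τ : A → List A, NonErasing τ ∧ Primitive τ ∧ IsMorphicImage τ x x

/-- An infinite word is primitive morphic if it is the morphic image of a pure primitive
morphic word over some finite alphabet. -/
def PrimitiveMorphic {B : Type*} (y : ℕ → B) : Prop :=
  ∃ (A : Type) (_ : Fintype A) (f : A → List B) (x : ℕ → A),
    NonErasing f ∧ PurePrimitiveMorphic x ∧ IsMorphicImage f x y

/-- A morphism is of class P if `f(a) = p qₐ` with `p` and each `qₐ` palindromes. -/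
def ClassP {A B : Type*} (f : A → List B) : Prop :=
  ∃ p : List B, IsPalindrome p ∧ ∀ a, ∃ q : List B, IsPalindrome q ∧ f a = p ++ q

/-- Two morphisms are conjugate if `f(a)u = u g(a)` for all `a`, or `u f(a) = g(a) u`
for all `a`, for some finite word `u`. -/
def Conjugate {A B : Type*} (f g : A → List B) : Prop :=
  ∃ u : List B, (∀ a, f a ++ u = u ++ g a) ∨ (∀ a, u ++ f a = g a ++ u)

/-- Class P' : morphisms conjugate to some class P morphism. -/
def ClassP' {A B : Type*} (f : A → List B) : Prop :=
  ∃ g : A → List B, ClassP g ∧ Conjugate f g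

/-- `FP'` : infinite words fixed by some primitive substitution of class P'. -/
def InFPprime {A : Type*} (x : ℕ → A) : Prop :=
  ∃ τ : A → List A, NonErasing τ ∧ Primitive τ ∧ ClassP' τ ∧ IsMorphicImage τ x x

/-- The number of occurrences of `u` in the finite word `w`. -/
noncomputable def occCount {A : Type*} (u w : List A) : ℕ :=
  {i : ℕ | i + u.length ≤ w.length ∧ (w.drop i).take u.length = u}.ncard

/-- `v` is a first return to the non-empty factor `u` in `x` : `vu` is a factor of `x`
beginning (and ending) in `u` and containing exactly two occurrences of `u`;
`vu` is then the corresponding complete first return to `u`. -/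
def FirstReturn {A : Type*} (u : List A) (x : ℕ → A) (v : List A) : Prop :=
  u ≠ [] ∧ IsFactor (v ++ u) x ∧ u <+: (v ++ u) ∧ occCount u (v ++ u) = 2

/-- An infinite word is uniformly recurrent if every factor occurs in every sufficiently
long factor. -/
def UniformlyRecurrent {A : Type*} (x : ℕ → A) : Prop :=
  ∀ u : List A, IsFactor u x → ∃ n, ∀ v : List A, IsFactor v x → v.length = n → u <:+: v

/-- `d` is the derived word of `x` at the non-empty prefix `u` : `x` factors as a
concatenation `r 0, r 1, r 2, …` of first returns to `u` (each complete first return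
`r n ++ u` occurring at the corresponding partial-sum position), and `d n` is the rank
of `r n` in the order of first occurrence, i.e. the number of distinct return words
appearing strictly before the first occurrence of `r n`. -/
def IsDerivedWord {A : Type*} (x : ℕ → A) (u : List A) (d : ℕ → ℕ) : Prop :=
  ∃ r : ℕ → List A,
    (∀ n, FirstReturn u x (r n)) ∧
    (∀ n, OccursAt (r n ++ u) x (∑ i ∈ Finset.range n, (r i).length)) ∧
    (∀ n, d n = (r '' {k | k < sInf {k | r k = r n}}).ncard)

/-- Class P_ret of Balková et al.: a morphism injective on letters such that for some
palindrome `p` (the marker), each `f(a)p` is a palindrome beginning and ending in `p`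
and containing exactly two occurrences of `p`. -/
def ClassPret {A B : Type*} (f : A → List B) : Prop :=
  (∀ a b : A, a ≠ b → f a ≠ f b) ∧
  ∃ p : List B, IsPalindrome p ∧ ∀ a,
    IsPalindrome (f a ++ p) ∧ p <+: (f a ++ p) ∧ p <:+ (f a ++ p) ∧
      occCount p (f a ++ p) = 2

/-!
Write `t(a)` for the last two letters of `f(a)`, so `t = (ac, ab, ab)`. Every `f(a)` alternates
between `a` and a letter of `{b, c}` and has even length, so the same holds for `x = f(x)`. Along
such an alternating word the images satisfy the local conjugacy `g(x_{k+1}) t(x_{k+1}) =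
t(x_k) f(x_{k+1})`; telescoping, and using `f(x_0) = f(a) = t(a)`, gives `g(x_1 x_2 ⋯) = x`.
Since `x_1 = c` and `|g(c)| = 2`, shifting once more gives `g(z) = z`.
-/

theorem wordTake_succ {A : Type*} (x : ℕ → A) (n : ℕ) :
    wordTake x (n + 1) = x 0 :: wordTake (fun i => x (i + 1)) n := by
  simp [wordTake, List.range_succ_eq_map]

theorem wordTake_add {A : Type*} (x : ℕ → A) (m n : ℕ) :
    wordTake x (m + n) = wordTake x m ++ wordTake (fun i => x (i + m)) n := by
  simp [wordTake, List.range_add, Function.comp_def, add_comm]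

theorem eq_wordTake_of_prefix {A : Type*} {l : List A} {x : ℕ → A} {m : ℕ}
    (h : l <+: wordTake x m) : l = wordTake x l.length := by
  have hle : l.length ≤ m := by simpa [wordTake] using h.length_le
  conv_lhs => rw [List.prefix_iff_eq_take.mp h]
  simp [wordTake, ← List.map_take, List.take_range, hle]

theorem listApply_cons {A B : Type*} (f : A → List B) (a : A) (w : List A) :
    listApply f (a :: w) = f a ++ listApply f w :=
  List.flatMap_cons ..

theorem listApply_wordTake_succ {A B : Type*} (f : A → List B) (x : ℕ → A) (n : ℕ) :
    listApply f (wordTake x (n + 1)) = listApply f (wordTake x n) ++ f (x n) := by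
  simp [wordTake, List.range_succ, listApply]

theorem length_le_length_listApply {A B : Type*} {f : A → List B} (hf : NonErasing f)
    (w : List A) : w.length ≤ (listApply f w).length := by
  induction w with
  | nil => simp
  | cons a w ih =>
    have := List.length_pos_of_ne_nil (hf a)
    rw [listApply_cons, List.length_append, List.length_cons]
    omega

namespace IsMorphicImage

variable {A B : Type*} {f : A → List B} {x : ℕ → A} {y : ℕ → B}

theorem apply_zero_eq_wordTake (hf : IsMorphicImage f x y) :
    f (x 0) = wordTake y (f (x 0)).length := by
  obtain ⟨n, hn⟩ := hf 1
  have hn : f (x 0) = wordTake y n := by simpa [wordTake, listApply] using hn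
  exact eq_wordTake_of_prefix ⟨[], by rw [List.append_nil, hn]⟩

theorem shift (hf : IsMorphicImage f x y) :
    IsMorphicImage f (fun n => x (n + 1)) (fun n => y (n + (f (x 0)).length)) := by
  intro k
  obtain ⟨n, hn⟩ := hf (k + 1)
  rw [wordTake_succ, listApply_cons] at hn
  have hlen : n = (f (x 0)).length + (listApply f (wordTake (fun i => x (i + 1)) k)).length := by
    simpa [wordTake] using congrArg List.length hn.symm
  rw [hlen, wordTake_add] at hn
  exact ⟨_, (List.append_inj hn (by simp [wordTake])).2⟩

theorem shift_of_localConjugate {g t : A → List B}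
    (hrel : ∀ k, g (x (k + 1)) ++ t (x (k + 1)) = t (x k) ++ f (x (k + 1)))
    (h0 : f (x 0) = t (x 0)) (hf : IsMorphicImage f x y) :
    IsMorphicImage g (fun n => x (n + 1)) y := by
  have telescope : ∀ n, listApply g (wordTake (fun i => x (i + 1)) n) ++ t (x n) =
      t (x 0) ++ listApply f (wordTake (fun i => x (i + 1)) n) := by
    intro n
    induction n with
    | zero => simp [wordTake, listApply]
    | succ n ih =>
      simp only [listApply_wordTake_succ, List.append_assoc, hrel]
      rw [← List.append_assoc, ih, List.append_assoc]
  intro n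
  obtain ⟨m, hm⟩ := hf (n + 1)
  rw [wordTake_succ, listApply_cons, h0, ← telescope] at hm
  exact ⟨_, eq_wordTake_of_prefix ⟨t (x n), hm⟩⟩

end IsMorphicImage

def IsAlternating {B : Type*} (p : B → Prop) (l : List B) : Prop :=
  ∀ i (h : i < l.length), p l[i] ↔ Even i

section Alternating

variable {A B : Type*} {p : B → Prop}

theorem IsAlternating.append {l₁ l₂ : List B} (h₁ : IsAlternating p l₁)
    (heven : Even l₁.length) (h₂ : IsAlternating p l₂) : IsAlternating p (l₁ ++ l₂) := by
  intro i hi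
  rw [List.getElem_append]
  split_ifs with hlt
  · exact h₁ i hlt
  · have hle : l₁.length ≤ i := Nat.le_of_not_lt hlt
    rw [h₂ _ (by simp at hi; omega)]
    obtain ⟨j, rfl⟩ := Nat.exists_eq_add_of_le hle
    simp [Nat.even_add, heven]

theorem isAlternating_listApply {f : A → List B}
    (hf : ∀ a, IsAlternating p (f a) ∧ Even (f a).length) (w : List A) :
    IsAlternating p (listApply f w) ∧ Even (listApply f w).length := by
  induction w with
  | nil => simp [listApply, IsAlternating]
  | cons a w ih =>
    rw [listApply_cons]
    exact ⟨(hf a).1.append (hf a).2 ih.1, by simpa using (hf a).2.add ih.2⟩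

theorem IsMorphicImage.alternating {f : A → List B} {x : ℕ → A} {y : ℕ → B}
    (hxy : IsMorphicImage f x y) (hne : NonErasing f)
    (hf : ∀ a, IsAlternating p (f a) ∧ Even (f a).length) (n : ℕ) : p (y n) ↔ Even n := by
  obtain ⟨m, hm⟩ := hxy (n + 1)
  have hn : n < (listApply f (wordTake x (n + 1))).length :=
    Nat.lt_of_lt_of_le (by simp [wordTake]) (length_le_length_listApply hne _)
  have := (isAlternating_listApply hf _).1 n hn
  simp only [hm] at this
  simpa [wordTake] using this

end Alternating

abbrev labbeF : Fin 3 → List (Fin 3) := ![[0, 2], [0, 2, 0, 1], [0, 1]]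

abbrev labbeG : Fin 3 → List (Fin 3) := ![[0, 1], [0, 2, 0, 2], [0, 2]]

abbrev labbeTail : Fin 3 → List (Fin 3) := ![[0, 2], [0, 1], [0, 1]]

theorem labbeF_isAlternating (a : Fin 3) :
    IsAlternating (· = 0) (labbeF a) ∧ Even (labbeF a).length := by
  unfold IsAlternating
  revert a
  decide

theorem labbeG_localConjugate {a b : Fin 3} (h : b = 0 ↔ a ≠ 0) :
    labbeG b ++ labbeTail b = labbeTail a ++ labbeF b := by
  revert a b
  decide

theorem classP_labbeG : ClassP labbeG := by
  refine ⟨[0], rfl, fun a => ?_⟩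
  fin_cases a
  exacts [⟨[1], rfl, rfl⟩, ⟨[2, 0, 2], rfl, rfl⟩, ⟨[2], rfl, rfl⟩]

/-- The letters `a, b, c` are encoded as `0, 1, 2 : Fin 3`. -/
theorem labbe_shift_classP_fixedPoint (x : ℕ → Fin 3)
    (hfix : IsMorphicImage (![[0, 2], [0, 2, 0, 1], [0, 1]] : Fin 3 → List (Fin 3)) x x)
    (h0 : x 0 = 0) (z : ℕ → Fin 3) (hz : ∀ n, z n = x (n + 2)) :
    IsMorphicImage (![[0, 1], [0, 2, 0, 2], [0, 2]] : Fin 3 → List (Fin 3)) z z ∧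
      ClassP (![[0, 1], [0, 2, 0, 2], [0, 2]] : Fin 3 → List (Fin 3)) := by
  obtain rfl : z = fun n => x (n + 2) := funext hz
  have halt : ∀ n, x n = 0 ↔ Even n :=
    hfix.alternating (by unfold NonErasing; decide) labbeF_isAlternating
  have hx1 : x 1 = 2 := by
    simpa [h0, wordTake, List.range_succ, eq_comm] using hfix.apply_zero_eq_wordTake
  have hgx : IsMorphicImage labbeG (fun n => x (n + 1)) x :=
    hfix.shift_of_localConjugate
      (fun k => labbeG_localConjugate (by simp only [ne_eq, halt, Nat.even_add_one]))
      (by rw [h0]; rfl)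
  have hgz := hgx.shift
  rw [hx1] at hgz
  exact ⟨hgz, classP_labbeG⟩
end

section
/- Every finite word u has at most |u| + 1 distinct palindromic factors, including the empty word; that is, #Pal(u) ≤ |u| + 1. -/
open List

/-
Droubay–Justin–Pirillo: appending a letter `a` to `u` creates at most one new palindromic
factor. A new factor of `u ++ [a]` must be a suffix, and of two palindromic suffixes the
shorter one is, by symmetry, also a prefix of the longer one, so it already occurs in `u`.
-/

section Palindromes

variable {A : Type*}

def palFactors (u : List A) : Set (List A) := {v | v <:+: u ∧ IsPalindrome v}

theorem palCount_eq_ncard_palFactors (u : List A) : palCount u = (palFactors u).ncard := rfl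

theorem palFactors_finite (u : List A) : (palFactors u).Finite :=
  (List.finite_toSet u.sublists).subset fun _ hv => List.mem_sublists.2 hv.1.sublist

theorem palFactors_mono {u w : List A} (h : u <:+: w) : palFactors u ⊆ palFactors w :=
  fun _ hv => ⟨hv.1.trans h, hv.2⟩

theorem palFactors_nil_subsingleton : (palFactors ([] : List A)).Subsingleton :=
  fun _ hv _ hw => (List.infix_nil.1 hv.1).trans (List.infix_nil.1 hw.1).symm

theorem IsPalindrome.isPrefix_of_isSuffix {v w : List A} (hv : IsPalindrome v)
    (hw : IsPalindrome w) (h : v <:+ w) : v <+: w := by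
  rw [← hv, ← hw]
  exact List.reverse_prefix.2 h

theorem List.infix_of_isPrefix_of_isSuffix_concat {v w u : List A} {a : A} (hvw : v <+: w)
    (hw : w <:+ u ++ [a]) (hlt : v.length < w.length) : v <:+: u := by
  obtain rfl | ⟨t, rfl, htu⟩ := List.suffix_concat_iff.1 hw
  · simp at hlt
  obtain rfl | hvt := List.prefix_concat_iff.1 hvw
  · exact absurd hlt (lt_irrefl _)
  · exact hvt.isInfix.trans htu.isInfix

theorem IsPalindrome.infix_of_isSuffix_concat {v w u : List A} {a : A} (hv : IsPalindrome v)
    (hw : IsPalindrome w) (hvs : v <:+ u ++ [a]) (hws : w <:+ u ++ [a])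
    (hlt : v.length < w.length) : v <:+: u :=
  List.infix_of_isPrefix_of_isSuffix_concat
    (hv.isPrefix_of_isSuffix hw (List.suffix_of_suffix_length_le hvs hws hlt.le)) hws hlt

theorem palFactors_concat_diff_subsingleton (u : List A) (a : A) :
    (palFactors (u ++ [a]) \ palFactors u).Subsingleton := by
  have new_suffix : ∀ v ∈ palFactors (u ++ [a]) \ palFactors u, v <:+ u ++ [a] ∧ ¬ v <:+: u :=
    fun v ⟨⟨hv, hpal⟩, hnew⟩ =>
      have hold : ¬ v <:+: u := fun h => hnew ⟨h, hpal⟩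
      ⟨(List.infix_concat_iff.1 hv).resolve_right hold, hold⟩
  intro v hv w hw
  obtain ⟨hvs, hvu⟩ := new_suffix v hv
  obtain ⟨hws, hwu⟩ := new_suffix w hw
  rcases lt_trichotomy v.length w.length with hlt | heq | hgt
  · exact absurd (hv.1.2.infix_of_isSuffix_concat hw.1.2 hvs hws hlt) hvu
  · exact (List.suffix_of_suffix_length_le hvs hws heq.le).eq_of_length heq
  · exact absurd (hw.1.2.infix_of_isSuffix_concat hv.1.2 hws hvs hgt) hwu

theorem palCount_concat_le (u : List A) (a : A) : palCount (u ++ [a]) ≤ palCount u + 1 := by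
  have hsub : palFactors u ⊆ palFactors (u ++ [a]) :=
    palFactors_mono (List.prefix_append u [a]).isInfix
  have hnew := palFactors_concat_diff_subsingleton u a
  rw [palCount_eq_ncard_palFactors, palCount_eq_ncard_palFactors,
    ← Set.ncard_sdiff_add_ncard_of_subset hsub (palFactors_finite _), add_comm]
  exact Nat.add_le_add_left ((Set.ncard_le_one hnew.finite).2 hnew) _

end Palindromes

/-- Every finite word `u` has at most `|u| + 1` distinct palindromic
factors (including the empty word). -/
theorem palCount_le {A : Type*} (u : List A) : palCount u ≤ u.length + 1 := by
  induction u using List.reverseRecOn with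
  | nil =>
    have hnil := palFactors_nil_subsingleton (A := A)
    exact (Set.ncard_le_one hnil.finite).2 hnil
  | append_singleton u a ih =>
    calc palCount (u ++ [a]) ≤ palCount u + 1 := palCount_concat_le u a
      _ ≤ (u ++ [a]).length + 1 := by simp [ih]
end
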